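/- arXiv:2412.20332 — 2 statements merged into one kernel-verified Lean document; each statement's English description precedes it below -/
import Mathlib

section
/- Let P = a·∏_{k=1}^m (x - r_k)^{μ_k} over ℂ with the r_k distinct, and let Q = ∏_{k : μ_k > j} (x - r_k)^{μ_k - j} for some j ≥ 0. Then gcd(Q, Q') is associated to ∏_{k : μ_k > j+1} (x - r_k)^{μ_k - j - 1}. -/
/-!
Write `Q = ∏ (X - r_k)^{e_k}`. In characteristic zero, at a root of multiplicity `e ≥ 1` the
derivative `Q'` has multiplicity exactly `e - 1`, so `gcd(Q, Q')` has multiplicity `e - 1` at every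
root of `Q` and no other roots. Being monic and split, `gcd(Q, Q')` is therefore
`∏ (X - r_k)^{e_k - 1}`; with `e_k = μ_k - j` this is the claimed product, since the factors
with `μ_k ≤ j` (resp. `μ_k ≤ j + 1`) are trivial.
-/

open Polynomial

namespace Polynomial

variable {K : Type*} [Field K]

theorem rootMultiplicity_gcd_derivative [CharZero K] [DecidableEq K] {p : K[X]} (hp : p ≠ 0)
    (t : K) : rootMultiplicity t (gcd p (derivative p)) = rootMultiplicity t p - 1 := by
  refine le_antisymm ?_ ((le_rootMultiplicity_iff (gcd_ne_zero_of_left hp)).2 (dvd_gcd ?_ ?_))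
  · by_cases hroot : p.IsRoot t
    · have hp' : derivative p ≠ 0 := derivative_ne_zero.2
        (natDegree_pos_iff_degree_pos.2 (degree_pos_of_root hp hroot)).ne'
      calc rootMultiplicity t (gcd p (derivative p))
          ≤ rootMultiplicity t (derivative p) :=
            rootMultiplicity_le_rootMultiplicity_of_dvd hp' (gcd_dvd_right _ _) t
        _ = rootMultiplicity t p - 1 := derivative_rootMultiplicity_of_root hroot
    · calc rootMultiplicity t (gcd p (derivative p))
          ≤ rootMultiplicity t p :=
            rootMultiplicity_le_rootMultiplicity_of_dvd hp (gcd_dvd_left _ _) t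
        _ = rootMultiplicity t p - 1 := by rw [rootMultiplicity_eq_zero hroot]
  · exact (pow_dvd_pow _ (Nat.sub_le _ _)).trans (pow_rootMultiplicity_dvd p t)
  · exact pow_sub_one_dvd_derivative_of_pow_dvd (pow_rootMultiplicity_dvd p t)

theorem eq_of_monic_of_splits_of_rootMultiplicity_eq {p q : K[X]} (hp : p.Monic) (hq : q.Monic)
    (hps : p.Splits) (hqs : q.Splits) (h : ∀ t, rootMultiplicity t p = rootMultiplicity t q) :
    p = q := by
  classical
  rw [hps.eq_prod_roots_of_monic hp, hqs.eq_prod_roots_of_monic hq]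
  congr 2
  exact Multiset.ext.2 fun t => by rw [count_roots, count_roots, h]

theorem rootMultiplicity_prod_X_sub_C_pow [DecidableEq K] {ι : Type*} (s : Finset ι) (r : ι → K)
    (e : ι → ℕ) (t : K) :
    rootMultiplicity t (∏ k ∈ s, (X - C (r k)) ^ e k) = ∑ k ∈ s with r k = t, e k := by
  have hne : ∏ k ∈ s, (X - C (r k)) ^ e k ≠ 0 :=
    Finset.prod_ne_zero_iff.2 fun k _ => pow_ne_zero _ (X_sub_C_ne_zero _)
  rw [← count_roots, roots_prod _ _ hne, Multiset.count_bind, Finset.sum_filter]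
  refine Finset.sum_congr rfl fun k _ => ?_
  simp [Multiset.count_singleton, eq_comm]

theorem gcd_derivative_prod_X_sub_C_pow [CharZero K] [DecidableEq K] {ι : Type*} [Fintype ι]
    {r : ι → K} (hr : Function.Injective r) (e : ι → ℕ) :
    gcd (∏ k, (X - C (r k)) ^ e k) (derivative (∏ k, (X - C (r k)) ^ e k)) =
      ∏ k, (X - C (r k)) ^ (e k - 1) := by
  have hmonic (n : ι → ℕ) : (∏ k, (X - C (r k)) ^ n k).Monic :=
    monic_prod_of_monic _ _ fun k _ => (monic_X_sub_C _).pow _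
  have hsplits (n : ι → ℕ) : (∏ k, (X - C (r k)) ^ n k).Splits :=
    Splits.prod fun k _ => (Splits.X_sub_C _).pow _
  set p := ∏ k, (X - C (r k)) ^ e k
  have hp : p ≠ 0 := (hmonic e).ne_zero
  have hgcd_monic : (gcd p (derivative p)).Monic := by
    simpa only [normalize_gcd] using monic_normalize (gcd_ne_zero_of_left hp)
  refine eq_of_monic_of_splits_of_rootMultiplicity_eq hgcd_monic (hmonic _)
    ((hsplits e).of_dvd hp (gcd_dvd_left _ _)) (hsplits _) fun t => ?_
  rw [rootMultiplicity_gcd_derivative hp, rootMultiplicity_prod_X_sub_C_pow,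
    rootMultiplicity_prod_X_sub_C_pow]
  by_cases ht : t ∈ Set.range r
  · obtain ⟨k, rfl⟩ := ht
    have hk : (Finset.univ.filter fun i => r i = r k) = {k} := by ext; simp [hr.eq_iff]
    rw [hk, Finset.sum_singleton, Finset.sum_singleton]
  · have hempty : (Finset.univ.filter fun i => r i = t) = ∅ := by
      ext; simpa using fun h => ht ⟨_, h⟩
    rw [hempty, Finset.sum_empty, Finset.sum_empty, Nat.zero_sub]

end Polynomial

theorem Finset.prod_filter_lt_pow_sub {M ι : Type*} [CommMonoid M] (s : Finset ι) (f : ι → M)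
    (μ : ι → ℕ) (c : ℕ) : ∏ k ∈ s with c < μ k, f k ^ (μ k - c) = ∏ k ∈ s, f k ^ (μ k - c) :=
  Finset.prod_filter_of_ne fun k _ hk => by
    contrapose! hk
    rw [Nat.sub_eq_zero_of_le hk, pow_zero]

theorem stmt_3_general {m : ℕ} (r : Fin m → ℂ) (hr : Function.Injective r)
    (μ : Fin m → ℕ) (j : ℕ)
    (Q : ℂ[X])
    (hQ : Q = ∏ k ∈ Finset.univ.filter (fun k => j < μ k), (X - C (r k)) ^ (μ k - j)) :
    Associated (gcd Q (derivative Q))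
      (∏ k ∈ Finset.univ.filter (fun k => j + 1 < μ k), (X - C (r k)) ^ (μ k - (j + 1))) := by
  rw [hQ, Finset.prod_filter_lt_pow_sub, Finset.prod_filter_lt_pow_sub,
    gcd_derivative_prod_X_sub_C_pow hr]
  simp only [Nat.sub_sub, Associated.refl]

/-- For `P = a·∏ (x - r_k)^{μ_k}` with distinct `r_k` and
`Q = ∏_{μ_k > j} (x - r_k)^{μ_k - j}`, the gcd of `Q` and `Q'` is associated to
`∏_{μ_k > j+1} (x - r_k)^{μ_k - j - 1}`. -/
theorem stmt_3 {m : ℕ} (a : ℂ) (ha : a ≠ 0) (r : Fin m → ℂ) (hr : Function.Injective r)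
    (μ : Fin m → ℕ) (P : ℂ[X]) (hP : P = C a * ∏ k, (X - C (r k)) ^ μ k) (j : ℕ)
    (Q : ℂ[X])
    (hQ : Q = ∏ k ∈ Finset.univ.filter (fun k => j < μ k), (X - C (r k)) ^ (μ k - j)) :
    Associated (gcd Q (derivative Q))
      (∏ k ∈ Finset.univ.filter (fun k => j + 1 < μ k), (X - C (r k)) ^ (μ k - (j + 1))) :=
  stmt_3_general r hr μ j Q hQ
end

section
/- Let P be a polynomial of degree n ≥ 2 over ℂ with multiplicity vector (μ_1,…,μ_m) (weakly decreasing), and let μ̄ be the conjugate partition. Then for every i with 1 ≤ i ≤ n, the degree of gcd(P^(0), …, P^(i)) equals ∑_{k=i+1}^{μ_1} μ̄_k (interpreted as 0 when i ≥ μ_1). -/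
/-!
In characteristic zero each derivative lowers the multiplicity of a root by exactly one until the
root disappears, so the gcd of `P, P', …, P⁽ⁱ⁾` has multiplicity `μ_k - i` (truncated at `0`) at
`r_k` and no other roots. Over `ℂ` its degree is therefore `∑_k (μ_k - i)`, which counts the cells
of the Young diagram of `μ` lying beyond column `i`; counting those cells column by column instead
gives `∑_{j > i} μ̄_j`.
-/

open Polynomial Finset

namespace Polynomial

section CharZeroDomain

variable {R : Type*} [CommRing R] [IsDomain R] [CharZero R] {p : R[X]} {t : R}

theorem rootMultiplicity_iterate_derivative {j : ℕ} (hj : j ≤ p.rootMultiplicity t) :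
    (derivative^[j] p).rootMultiplicity t = p.rootMultiplicity t - j := by
  induction j with
  | zero => rfl
  | succ j ih =>
    rw [Function.iterate_succ_apply', derivative_rootMultiplicity_of_root
      (isRoot_iterate_derivative_of_lt_rootMultiplicity hj), ih (by omega)]
    omega

theorem not_isRoot_iterate_derivative_rootMultiplicity (hp : p ≠ 0) :
    ¬ (derivative^[p.rootMultiplicity t] p).IsRoot t := by
  intro hroot
  refine lt_irrefl _
    ((lt_rootMultiplicity_iff_isRoot_iterate_derivative (t := t) hp).2 fun j hj => ?_)
  rcases hj.lt_or_eq with hlt | heq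
  · exact isRoot_iterate_derivative_of_lt_rootMultiplicity hlt
  · exact heq ▸ hroot

end CharZeroDomain

theorem rootMultiplicity_gcd_iterate_derivative {K : Type*} [Field K] [CharZero K]
    [DecidableEq K] (p : K[X]) (t : K) (i : ℕ) :
    ((range (i + 1)).gcd fun j => derivative^[j] p).rootMultiplicity t
      = p.rootMultiplicity t - i := by
  set g := (range (i + 1)).gcd fun j => derivative^[j] p
  set m := p.rootMultiplicity t
  have hg_dvd : ∀ j ≤ i, g ∣ derivative^[j] p := fun j hj =>
    gcd_dvd (mem_range.2 (Nat.lt_succ_of_le hj))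
  by_cases hp : p = 0
  · simp [g, m, hp, Finset.gcd_eq_zero_iff]
  apply le_antisymm
  · rcases lt_or_ge i m with him | hmi
    · have hDi := rootMultiplicity_iterate_derivative (p := p) (t := t) him.le
      have hne : derivative^[i] p ≠ 0 := fun h0 => by simp [h0] at hDi; omega
      exact hDi ▸ rootMultiplicity_le_rootMultiplicity_of_dvd hne (hg_dvd i le_rfl) t
    · rw [rootMultiplicity_eq_zero fun hroot =>
        not_isRoot_iterate_derivative_rootMultiplicity hp (hroot.dvd (hg_dvd m hmi))]
      exact Nat.zero_le _
  · have hg : g ≠ 0 := ne_zero_of_dvd_ne_zero hp (hg_dvd 0 (Nat.zero_le i))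
    refine (le_rootMultiplicity_iff hg).2 (dvd_gcd fun j hj => ?_)
    exact (pow_dvd_pow _ (by simp at hj; omega)).trans
      (pow_sub_dvd_iterate_derivative_of_pow_dvd j (p.pow_rootMultiplicity_dvd t))

theorem natDegree_eq_sum_rootMultiplicity {K : Type*} [Field K] [IsAlgClosed K] {g : K[X]}
    {s : Finset K} (hs : ∀ t, g.IsRoot t → t ∈ s) :
    g.natDegree = ∑ t ∈ s, g.rootMultiplicity t := by
  classical
  rw [← IsAlgClosed.card_roots_eq_natDegree,
    ← Multiset.sum_count_eq_card fun t ht => hs t (isRoot_of_mem_roots ht)]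
  simp only [count_roots]

theorem rootMultiplicity_C_mul_prod_X_sub_C_pow {K ι : Type*} [Field K] [Fintype ι] {a : K}
    (ha : a ≠ 0) {r : ι → K} (hr : Function.Injective r) (μ : ι → ℕ) (k : ι) :
    (C a * ∏ j, (X - C (r j)) ^ μ j).rootMultiplicity (r k) = μ k := by
  classical
  rw [← count_roots, roots_C_mul _ ha,
    roots_prod _ _ (prod_ne_zero_iff.2 fun j _ => pow_ne_zero _ (X_sub_C_ne_zero _))]
  simp only [roots_pow, roots_X_sub_C, Multiset.count_bind, Multiset.count_nsmul,
    Multiset.count_singleton, hr.eq_iff]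
  simp

end Polynomial

theorem Finset.sum_tsub_eq_sum_card_filter_le {ι : Type*} (s : Finset ι) (f : ι → ℕ)
    (i M : ℕ) (hf : ∀ k ∈ s, f k ≤ M) :
    ∑ k ∈ s, (f k - i) = ∑ j ∈ Icc (i + 1) M, #{k ∈ s | j ≤ f k} := by
  simp_rw [card_filter]
  rw [sum_comm]
  refine sum_congr rfl fun k hk => ?_
  rw [← sum_filter, sum_const, smul_eq_mul, mul_one]
  have hIcc : {j ∈ Icc (i + 1) M | j ≤ f k} = Icc (i + 1) (f k) := by
    ext j; simp only [mem_filter, mem_Icc]; have := hf k hk; omega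
  rw [hIcc, Nat.card_Icc]
  omega

theorem stmt_9_general {n m : ℕ} (hm : 0 < m) (a : ℂ) (ha : a ≠ 0)
    (r : Fin m → ℂ) (hr : Function.Injective r) (μ : Fin m → ℕ) (hanti : Antitone μ)
    (P : ℂ[X])
    (hP : P = C a * ∏ k, (X - C (r k)) ^ μ k)
    (bar : ℕ → ℕ) (hbar : ∀ i, bar i = (Finset.univ.filter (fun j => i ≤ μ j)).card) :
    ∀ i, 1 ≤ i → i ≤ n →
      (Finset.gcd (Finset.range (i + 1)) (fun j => derivative^[j] P)).natDegree
        = ∑ k ∈ Finset.Icc (i + 1) (μ ⟨0, hm⟩), bar k := by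
  intro i _ _
  set g := (range (i + 1)).gcd fun j => derivative^[j] P
  have hroots : ∀ z, g.IsRoot z → z ∈ univ.image r := fun z hz => by
    have hPz : P.IsRoot z := hz.dvd (gcd_dvd (mem_range.2 i.succ_pos))
    simp only [hP, IsRoot, eval_mul, eval_C, eval_prod, eval_pow, eval_sub, eval_X, mul_eq_zero,
      ha, false_or, prod_eq_zero_iff, pow_eq_zero_iff', sub_eq_zero] at hPz
    obtain ⟨k, -, rfl, -⟩ := hPz
    exact mem_image_of_mem r (mem_univ k)
  calc g.natDegree = ∑ k, (μ k - i) := by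
        rw [natDegree_eq_sum_rootMultiplicity hroots, sum_image hr.injOn]
        simp only [g, rootMultiplicity_gcd_iterate_derivative, hP,
          rootMultiplicity_C_mul_prod_X_sub_C_pow ha hr]
    _ = _ := by
        rw [sum_tsub_eq_sum_card_filter_le _ _ _ _ fun k _ =>
          hanti (show (⟨0, hm⟩ : Fin m) ≤ k from Nat.zero_le _)]
        simp [hbar]

/-- For `P` of degree `n ≥ 2` over `ℂ` with multiplicity vector `μ` (weakly decreasing)
and conjugate `μ̄`, for every `1 ≤ i ≤ n` the degree of `gcd(P⁽⁰⁾, …, P⁽ⁱ⁾)` equals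
`∑_{k=i+1}^{μ_1} μ̄_k`. -/
theorem stmt_9 {n m : ℕ} (hn : 2 ≤ n) (hm : 0 < m) (a : ℂ) (ha : a ≠ 0)
    (r : Fin m → ℂ) (hr : Function.Injective r) (μ : Fin m → ℕ) (hanti : Antitone μ)
    (hpos : ∀ j, 1 ≤ μ j) (hsum : ∑ j, μ j = n) (P : ℂ[X])
    (hP : P = C a * ∏ k, (X - C (r k)) ^ μ k)
    (bar : ℕ → ℕ) (hbar : ∀ i, bar i = (Finset.univ.filter (fun j => i ≤ μ j)).card) :
    ∀ i, 1 ≤ i → i ≤ n →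
      (Finset.gcd (Finset.range (i + 1)) (fun j => derivative^[j] P)).natDegree
        = ∑ k ∈ Finset.Icc (i + 1) (μ ⟨0, hm⟩), bar k :=
  stmt_9_general hm a ha r hr μ hanti P hP bar hbar
end
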